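/- arXiv:2007.03114 — 3 statements merged into one kernel-verified Lean document; each statement's English description precedes it below -/
import Mathlib

section
/- Cascaded CP marginal coverage: Let (X,Y) be a random pair, and suppose the corrected p-value random variable P̃ = M(P₁,...,Pₘ) evaluated at the true label satisfies ℙ(P̃ ≤ ε) ≤ ε, where M is element-wise monotonic. Then for every j ∈ {1,...,m}, the step-j conformal set C^j = { y : M(P₁(y),...,Pⱼ(y),1,...,1) > ε } satisfies ℙ(Y ∈ C^j) ≥ 1 − ε. -/
open MeasureTheory

/-!
Replacing the p-values not yet computed by `1` can only raise the monotone combination `M`,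
so whenever the true label is excluded from the step-`j` set, the fully corrected p-value at
the true label is already `≤ ε`. The miscoverage probability is therefore at most `ε`.
-/

def padOnes {m : ℕ} (j : ℕ) (p : Fin m → ℝ) : Fin m → ℝ :=
  fun k => if (k : ℕ) < j then p k else 1

lemma padOnes_mem_Icc {m j : ℕ} {p : Fin m → ℝ} (hp : ∀ k, p k ∈ Set.Icc (0 : ℝ) 1) (k : Fin m) :
    padOnes j p k ∈ Set.Icc (0 : ℝ) 1 := by
  unfold padOnes
  split_ifs
  · exact hp k
  · exact ⟨zero_le_one, le_rfl⟩

lemma le_padOnes {m j : ℕ} {p : Fin m → ℝ} (hp : ∀ k, p k ≤ 1) (k : Fin m) :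
    p k ≤ padOnes j p k := by
  unfold padOnes
  split_ifs
  · exact le_rfl
  · exact hp k

lemma one_sub_le_measure_of_measure_compl_le {Ω : Type*} [MeasurableSpace Ω] {μ : Measure Ω}
    [IsProbabilityMeasure μ] {s : Set Ω} {δ : ENNReal} (h : μ sᶜ ≤ δ) : 1 - δ ≤ μ s :=
  tsub_le_iff_right.2 <| calc
    1 = μ Set.univ := measure_univ.symm
    _ ≤ μ s + μ sᶜ := measure_univ_le_add_compl s
    _ ≤ μ s + δ := by gcongr

theorem cascaded_cp_marginal_coverage_general
    {Ω : Type*} [MeasurableSpace Ω] (μ : Measure Ω) [IsProbabilityMeasure μ]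
    {𝒴 : Type*} (Y : Ω → 𝒴) (m : ℕ) (M : (Fin m → ℝ) → ℝ)
    (hmono : ∀ p q : Fin m → ℝ, (∀ k, p k ∈ Set.Icc (0 : ℝ) 1) →
      (∀ k, q k ∈ Set.Icc (0 : ℝ) 1) → (∀ k, p k ≤ q k) → M p ≤ M q)
    (P : Fin m → 𝒴 → Ω → ℝ) (hP : ∀ k y ω, P k y ω ∈ Set.Icc (0 : ℝ) 1)
    (ε : ℝ)
    (hvalid : μ {ω | M (fun k => P k (Y ω) ω) ≤ ε} ≤ ENNReal.ofReal ε) :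
    ∀ j : ℕ, j ≤ m →
      1 - ENNReal.ofReal ε
        ≤ μ {ω | Y ω ∈ {y | ε < M (fun k => if (k : ℕ) < j then P k y ω else 1)}} := by
  intro j _
  refine one_sub_le_measure_of_measure_compl_le (le_trans (measure_mono ?_) hvalid)
  intro ω hω
  have hmiss : M (padOnes j fun k => P k (Y ω) ω) ≤ ε := not_lt.1 hω
  have hPω : ∀ k, P k (Y ω) ω ∈ Set.Icc (0 : ℝ) 1 := fun k => hP k (Y ω) ω
  exact (hmono _ _ hPω (padOnes_mem_Icc hPω) (le_padOnes fun k => (hPω k).2)).trans hmiss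

/-- Cascaded CP marginal coverage: if the fully corrected p-value at the true
label is superuniform at level `ε`, then every step-`j` conservative conformal
set covers the true label with probability at least `1 - ε`. -/
theorem cascaded_cp_marginal_coverage
    {Ω : Type*} [MeasurableSpace Ω] (μ : Measure Ω) [IsProbabilityMeasure μ]
    {𝒴 : Type*} (Y : Ω → 𝒴) (m : ℕ) (M : (Fin m → ℝ) → ℝ)
    (hM0 : ∀ p : Fin m → ℝ, (∀ k, p k ∈ Set.Icc (0 : ℝ) 1) → 0 ≤ M p)
    (hmono : ∀ p q : Fin m → ℝ, (∀ k, p k ∈ Set.Icc (0 : ℝ) 1) →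
      (∀ k, q k ∈ Set.Icc (0 : ℝ) 1) → (∀ k, p k ≤ q k) → M p ≤ M q)
    (P : Fin m → 𝒴 → Ω → ℝ) (hP : ∀ k y ω, P k y ω ∈ Set.Icc (0 : ℝ) 1)
    (ε : ℝ) (hε : ε ∈ Set.Ioo (0 : ℝ) 1)
    (hvalid : μ {ω | M (fun k => P k (Y ω) ω) ≤ ε} ≤ ENNReal.ofReal ε) :
    ∀ j : ℕ, j ≤ m →
      1 - ENNReal.ofReal ε
        ≤ μ {ω | Y ω ∈ {y | ε < M (fun k => if (k : ℕ) < j then P k y ω else 1)}} :=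
  cascaded_cp_marginal_coverage_general μ Y m M hmono P hP ε hvalid
end

section
/- Exchangeability implies valid conformal p-values: Let V₁,...,V_{n+1} be exchangeable real-valued random variables. Define the p-value P = (1 + #{i ≤ n : Vᵢ ≥ V_{n+1}}) / (n+1). Then for all ε ∈ (0,1), ℙ(P ≤ ε) ≤ ε. -/
open MeasureTheory Finset ENNReal

noncomputable def rk (n : ℕ) (j : Fin (n+1)) (x : Fin (n+1) → ℝ) : ℕ :=
  (Finset.univ.filter (fun i => x j ≤ x i)).card

lemma rk_key {n : ℕ} (k : ℕ) (x : Fin (n+1) → ℝ) :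
    (Finset.univ.filter (fun j => rk n j x ≤ k)).card ≤ k := by
  set S := Finset.univ.filter (fun j => rk n j x ≤ k) with hS
  rcases S.eq_empty_or_nonempty with h | h
  · simp [h]
  · obtain ⟨j, hjS, hj⟩ := S.exists_min_image x h
    have hsub : S ⊆ Finset.univ.filter (fun i => x j ≤ x i) := by
      intro i hi
      simp only [Finset.mem_filter, Finset.mem_univ, true_and]
      exact hj i hi
    calc S.card ≤ (Finset.univ.filter (fun i => x j ≤ x i)).card :=
          Finset.card_le_card hsub
      _ = rk n j x := rfl
      _ ≤ k := by
          have := Finset.mem_filter.1 (hS ▸ hjS)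
          exact this.2

lemma rk_measurable {n : ℕ} (j : Fin (n+1)) : Measurable (rk n j) := by
  have h : rk n j = fun x => ∑ i : Fin (n+1), if x j ≤ x i then 1 else 0 := by
    funext x; rw [rk, Finset.card_filter]
  rw [h]
  exact Finset.measurable_sum _ fun i _ =>
    Measurable.ite (measurableSet_le (measurable_pi_apply j) (measurable_pi_apply i))
      measurable_const measurable_const

lemma rk_comp_perm {n : ℕ} (σ : Equiv.Perm (Fin (n+1))) (j : Fin (n+1)) (x : Fin (n+1) → ℝ) :
    rk n j (x ∘ σ) = rk n (σ j) x := by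
  unfold rk
  have h : Finset.univ.filter (fun i => x (σ j) ≤ x i) =
      (Finset.univ.filter (fun i : Fin (n+1) => x (σ j) ≤ x (σ i))).map σ.toEmbedding := by
    ext i
    simp only [Finset.mem_map, Finset.mem_filter, Finset.mem_univ, true_and,
      Equiv.coe_toEmbedding]
    constructor
    · intro hi; exact ⟨σ.symm i, by simpa using hi, by simp⟩
    · rintro ⟨a, ha, rfl⟩; exact ha
  simp only [Function.comp]
  rw [h, Finset.card_map]

/-- Exchangeability implies the conformal p-value is superuniform. -/
theorem conformal_pvalue_superuniform
    {Ω : Type*} [MeasurableSpace Ω] (μ : Measure Ω) [IsProbabilityMeasure μ]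
    (n : ℕ) (V : Fin (n + 1) → Ω → ℝ) (hmeas : ∀ i, Measurable (V i))
    (hexch : ∀ σ : Equiv.Perm (Fin (n + 1)),
      Measure.map (fun ω i => V (σ i) ω) μ = Measure.map (fun ω i => V i ω) μ)
    (P : Ω → ℝ)
    (hP : ∀ ω, P ω = (1 + (Finset.univ.filter
        (fun i : Fin n => V (Fin.last n) ω ≤ V i.castSucc ω)).card : ℝ) / (n + 1)) :
    ∀ ε ∈ Set.Ioo (0 : ℝ) 1, μ {ω | P ω ≤ ε} ≤ ENNReal.ofReal ε := by
  intro ε hε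
  obtain ⟨hε0, hε1⟩ := hε
  set W : Ω → (Fin (n+1) → ℝ) := fun ω i => V i ω with hW
  have hWmeas : Measurable W := measurable_pi_lambda _ fun i => hmeas i
  set ν := Measure.map W μ with hν
  have hνprob : IsProbabilityMeasure ν := Measure.isProbabilityMeasure_map hWmeas.aemeasurable
  set k := ⌊ε * (n + 1)⌋₊ with hk
  set A : Fin (n+1) → Set (Fin (n+1) → ℝ) := fun j => {x | rk n j x ≤ k} with hA
  have hAmeas : ∀ j, MeasurableSet (A j) :=
    fun j => (rk_measurable j) (measurableSet_Iic (a := k))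
  -- equal measures
  have hsame : ∀ j, ν (A j) = ν (A (Fin.last n)) := by
    intro j
    set σ := Equiv.swap j (Fin.last n) with hσ
    have hcomp : Measurable (fun x : Fin (n+1) → ℝ => x ∘ σ) :=
      measurable_pi_lambda _ fun i => measurable_pi_apply (σ i)
    have hmap : Measure.map (fun x : Fin (n+1) → ℝ => x ∘ σ) ν = ν := by
      rw [hν, Measure.map_map hcomp hWmeas]
      have : (fun x : Fin (n+1) → ℝ => x ∘ σ) ∘ W = fun ω i => V (σ i) ω := rfl
      rw [this]
      exact hexch σ
    have hpre : A j = (fun x : Fin (n+1) → ℝ => x ∘ σ) ⁻¹' (A (Fin.last n)) := by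
      ext x
      simp only [hA, Set.mem_preimage, Set.mem_setOf_eq]
      rw [rk_comp_perm]
      simp [hσ]
    rw [hpre, ← Measure.map_apply hcomp (hAmeas (Fin.last n)), hmap]
  -- sum bound
  have hsum : ∑ j : Fin (n+1), ν (A j) ≤ (k : ℝ≥0∞) := by
    have h1 : ∀ j : Fin (n+1), ν (A j) = ∫⁻ x, (A j).indicator 1 x ∂ν := by
      intro j; rw [lintegral_indicator_one (hAmeas j)]
    calc ∑ j : Fin (n+1), ν (A j)
        = ∑ j : Fin (n+1), ∫⁻ x, (A j).indicator 1 x ∂ν := by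
          exact Finset.sum_congr rfl fun j _ => h1 j
      _ = ∫⁻ x, ∑ j : Fin (n+1), (A j).indicator 1 x ∂ν := by
          rw [lintegral_finset_sum]
          exact fun j _ => measurable_one.indicator (hAmeas j)
      _ ≤ ∫⁻ _, (k : ℝ≥0∞) ∂ν := by
          apply lintegral_mono
          intro x
          dsimp only
          have : ∑ j : Fin (n+1), (A j).indicator (1 : (Fin (n+1) → ℝ) → ℝ≥0∞) x
              = ((Finset.univ.filter (fun j => rk n j x ≤ k)).card : ℝ≥0∞) := by
            rw [Finset.card_filter]
            push_cast
            apply Finset.sum_congr rfl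
            intro j _
            by_cases hj : rk n j x ≤ k
            · simp [hA, Set.indicator, hj]
            · simp [hA, Set.indicator, hj]
          rw [this]
          exact_mod_cast Nat.cast_le.2 (rk_key k x)
      _ = (k : ℝ≥0∞) := by simp
  have hmeasure : ((n : ℝ≥0∞) + 1) * ν (A (Fin.last n)) ≤ (k : ℝ≥0∞) := by
    have : ∑ j : Fin (n+1), ν (A j) = (n + 1 : ℕ) • ν (A (Fin.last n)) := by
      rw [Finset.sum_congr rfl fun j _ => hsame j, Finset.sum_const, Finset.card_univ,
        Fintype.card_fin]
    rw [this, nsmul_eq_mul] at hsum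
    convert hsum using 2
    push_cast; ring
  -- identify the event
  have hrank : ∀ ω, rk n (Fin.last n) (W ω) =
      1 + (Finset.univ.filter
        (fun i : Fin n => V (Fin.last n) ω ≤ V i.castSucc ω)).card := by
    intro ω
    rw [rk, Fin.univ_castSuccEmb, Finset.filter_cons, if_pos le_rfl, Finset.card_cons,
      Finset.filter_map, Finset.card_map, add_comm]
    rfl
  have hset : {ω | P ω ≤ ε} = W ⁻¹' (A (Fin.last n)) := by
    ext ω
    simp only [Set.mem_setOf_eq, Set.mem_preimage, hA]
    rw [hP ω]
    have hn1 : (0:ℝ) < (n:ℝ) + 1 := by positivity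
    rw [div_le_iff₀ hn1]
    have hcast : (1 + (Finset.univ.filter
        (fun i : Fin n => V (Fin.last n) ω ≤ V i.castSucc ω)).card : ℝ)
        = (rk n (Fin.last n) (W ω) : ℝ) := by
      rw [hrank ω]; push_cast; ring
    rw [hcast, hk]
    rw [Nat.le_floor_iff (by positivity)]
  rw [hset, Measure.map_apply hWmeas (hAmeas (Fin.last n)) |>.symm, ← hν]
  have hdiv : ν (A (Fin.last n)) ≤ (k : ℝ≥0∞) / ((n : ℝ≥0∞) + 1) := by
    rw [ENNReal.le_div_iff_mul_le (by simp) (by simp)]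
    rw [mul_comm]
    exact hmeasure
  refine hdiv.trans ?_
  have h1 : (k : ℝ≥0∞) / ((n : ℝ≥0∞) + 1) = ENNReal.ofReal ((k : ℝ) / ((n:ℝ) + 1)) := by
    rw [ENNReal.ofReal_div_of_pos (by positivity)]
    congr 1
    · exact (ENNReal.ofReal_natCast k).symm
    · rw [ENNReal.ofReal_add (by positivity) (by norm_num), ENNReal.ofReal_natCast,
        ENNReal.ofReal_one]
  rw [h1]
  apply ENNReal.ofReal_le_ofReal
  rw [div_le_iff₀ (by positivity)]
  exact (Nat.floor_le (by positivity)).trans_eq (by ring)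
end

section
/- If V₁,...,V_{n+1} are exchangeable and almost surely have no ties, then the conformal p-value P = (1 + #{i ≤ n : Vᵢ ≥ V_{n+1}})/(n+1) is uniformly distributed on {1/(n+1), 2/(n+1), ..., 1}. -/
/-!
Off the null event of ties, `j ↦ upperRank v j` (the number of other coordinates at least `v j`)
is a bijection onto `{0, …, n}`, so for each `k` the events `{upperRank V j = k}`, `j ≤ n`, form
an almost sure partition of `Ω`. Exchangeability under the transposition of `j` and the last index
gives them equal probability, hence each has probability `1 / (n + 1)`; for the last index this
event is exactly `{P = (k + 1) / (n + 1)}`.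
-/

open MeasureTheory Finset
open scoped ENNReal

section UpperRank

variable {ι α : Type*} [Fintype ι] [DecidableEq ι] [LinearOrder α]

def upperRank (v : ι → α) (j : ι) : ℕ := #{i | i ≠ j ∧ v j ≤ v i}

lemma upperRank_comp_perm (σ : Equiv.Perm ι) (v : ι → α) (j : ι) :
    upperRank (v ∘ σ) j = upperRank v (σ j) :=
  card_equiv σ fun i => by simp

lemma upperRank_lt_card (v : ι → α) (j : ι) : upperRank v j < Fintype.card ι :=
  card_lt_univ_of_notMem (x := j) (by simp)

lemma upperRank_eq_card_lt {v : ι → α} (hv : Function.Injective v) (j : ι) :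
    upperRank v j = #{i | v j < v i} := by
  unfold upperRank
  congr 1
  ext i
  simp only [mem_filter, mem_univ, true_and, lt_iff_le_and_ne, hv.ne_iff]
  tauto

lemma upperRank_lt_of_lt {v : ι → α} (hv : Function.Injective v) {j j' : ι}
    (h : v j < v j') : upperRank v j' < upperRank v j := by
  rw [upperRank_eq_card_lt hv, upperRank_eq_card_lt hv]
  refine card_lt_card ⟨fun i hi => ?_, fun hsub => ?_⟩
  · simp only [mem_filter, mem_univ, true_and] at hi ⊢
    exact h.trans hi
  · exact lt_irrefl _ (mem_filter.1 (hsub (mem_filter.2 ⟨mem_univ _, h⟩))).2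

lemma upperRank_injective {v : ι → α} (hv : Function.Injective v) :
    Function.Injective (upperRank v) := by
  intro j j' hjj'
  by_contra hne
  rcases (hv.ne hne).lt_or_gt with h | h
  · exact (upperRank_lt_of_lt hv h).ne' hjj'
  · exact (upperRank_lt_of_lt hv h).ne hjj'

lemma existsUnique_upperRank_eq {v : ι → α} (hv : Function.Injective v) {k : ℕ}
    (hk : k < Fintype.card ι) : ∃! j, upperRank v j = k := by
  let r : ι → Fin (Fintype.card ι) := fun j => ⟨upperRank v j, upperRank_lt_card v j⟩
  have hr : Function.Bijective r :=
    (Fintype.bijective_iff_injective_and_card r).2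
      ⟨fun j j' h => upperRank_injective hv (Fin.val_eq_of_eq h), by simp⟩
  obtain ⟨j, hj⟩ := hr.existsUnique ⟨k, hk⟩
  exact ⟨j, congrArg Fin.val hj.1, fun j' hj' => hj.2 j' (Fin.ext hj')⟩

lemma upperRank_last {n : ℕ} (v : Fin (n + 1) → α) :
    upperRank v (Fin.last n) = #{i : Fin n | v (Fin.last n) ≤ v i.castSucc} := by
  simp only [upperRank, card_filter, Fin.sum_univ_castSucc]
  simp [Fin.castSucc_ne_last]

variable [MeasurableSpace α] [TopologicalSpace α] [OpensMeasurableSpace α]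
  [OrderClosedTopology α] [SecondCountableTopology α]

lemma measurable_upperRank (j : ι) : Measurable fun v : ι → α => upperRank v j := by
  simp only [upperRank, card_filter]
  refine Finset.measurable_sum _ fun i _ => Measurable.ite ?_ measurable_const measurable_const
  exact (MeasurableSet.const (i ≠ j)).inter
    (measurableSet_le (measurable_pi_apply j) (measurable_pi_apply i))

end UpperRank

section Exchangeable

variable {Ω ι : Type*} [MeasurableSpace Ω] {μ : Measure Ω}

lemma ae_injective_of_measure_eq_zero {β : Type*} [Countable ι] {X : ι → Ω → β}
    (h : ∀ i j, i ≠ j → μ {ω | X i ω = X j ω} = 0) :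
    ∀ᵐ ω ∂μ, Function.Injective fun i => X i ω := by
  refine ae_all_iff.2 fun i => ae_all_iff.2 fun j => ?_
  by_cases hij : i = j
  · exact ae_of_all _ fun _ _ => hij
  · filter_upwards [measure_eq_zero_iff_ae_notMem.1 (h i j hij)] with ω hω heq
    exact absurd heq hω

lemma measure_eq_inv_card_of_ae_existsUnique [IsProbabilityMeasure μ] [Fintype ι]
    {A : ι → Set Ω} (hA : ∀ i, NullMeasurableSet (A i) μ) (hsame : ∀ i j, μ (A i) = μ (A j))
    (hpart : ∀ᵐ ω ∂μ, ∃! i, ω ∈ A i) (i : ι) :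
    μ (A i) = (Fintype.card ι : ℝ≥0∞)⁻¹ := by
  have hdisj : Pairwise (Function.onFun (AEDisjoint μ) A) := by
    intro j j' hne
    refine measure_eq_zero_iff_ae_notMem.2 ?_
    filter_upwards [hpart] with ω ⟨_, _, huniq⟩ hω
    exact hne ((huniq j hω.1).trans (huniq j' hω.2).symm)
  have hcover : μ (⋃ j, A j) = 1 := by
    rw [← measure_univ (μ := μ)]
    refine measure_congr (Filter.eventuallyEq_univ.2 ?_)
    filter_upwards [hpart] with ω ⟨j, hj, _⟩
    exact Set.mem_iUnion.2 ⟨j, hj⟩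
  have hsum : ∑ j, μ (A j) = 1 := by
    rw [← hcover, measure_iUnion₀ hdisj hA, tsum_fintype]
  rw [sum_congr rfl fun j _ => hsame j i, sum_const, card_univ, nsmul_eq_mul, mul_comm] at hsum
  exact ENNReal.eq_inv_of_mul_eq_one_left hsum

variable {α : Type*} [LinearOrder α] [MeasurableSpace α] [TopologicalSpace α]
  [OpensMeasurableSpace α] [OrderClosedTopology α] [SecondCountableTopology α]
  [Fintype ι] [DecidableEq ι]

lemma measure_upperRank_eq_of_exchangeable {V : ι → Ω → α} (hV : ∀ i, Measurable (V i))
    (hexch : ∀ σ : Equiv.Perm ι,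
      μ.map (fun ω i => V (σ i) ω) = μ.map (fun ω i => V i ω)) (k : ℕ) (j j' : ι) :
    μ {ω | upperRank (fun i => V i ω) j = k} = μ {ω | upperRank (fun i => V i ω) j' = k} := by
  let σ := Equiv.swap j j'
  have hS : MeasurableSet {v : ι → α | upperRank v j' = k} :=
    measurable_upperRank j' (measurableSet_singleton k)
  have hshuffle : {ω | upperRank (fun i => V i ω) j = k}
      = (fun ω i => V (σ i) ω) ⁻¹' {v | upperRank v j' = k} := by
    ext ω
    change upperRank (fun i => V i ω) j = k ↔ upperRank ((fun i => V i ω) ∘ σ) j' = k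
    rw [upperRank_comp_perm, Equiv.swap_apply_right]
  rw [hshuffle, ← Measure.map_apply (measurable_pi_lambda _ fun i => hV (σ i)) hS, hexch,
    Measure.map_apply (measurable_pi_lambda _ hV) hS]
  rfl

end Exchangeable

/-- With exchangeable, almost surely tie-free scores, the conformal p-value is
uniformly distributed on `{1/(n+1), …, 1}`. -/
theorem conformal_pvalue_uniform
    {Ω : Type*} [MeasurableSpace Ω] (μ : Measure Ω) [IsProbabilityMeasure μ]
    (n : ℕ) (V : Fin (n + 1) → Ω → ℝ) (hmeas : ∀ i, Measurable (V i))
    (hexch : ∀ σ : Equiv.Perm (Fin (n + 1)),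
      Measure.map (fun ω i => V (σ i) ω) μ = Measure.map (fun ω i => V i ω) μ)
    (hnoties : ∀ i j : Fin (n + 1), i ≠ j → μ {ω | V i ω = V j ω} = 0)
    (P : Ω → ℝ)
    (hP : ∀ ω, P ω = (1 + (Finset.univ.filter
        (fun i : Fin n => V (Fin.last n) ω ≤ V i.castSucc ω)).card : ℝ) / (n + 1)) :
    ∀ k : Fin (n + 1), μ {ω | P ω = ((k : ℕ) + 1 : ℝ) / (n + 1)} = 1 / (n + 1) := by
  intro k
  have hevent : {ω | P ω = ((k : ℕ) + 1 : ℝ) / (n + 1)}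
      = {ω | upperRank (fun i => V i ω) (Fin.last n) = k} := by
    ext ω
    change P ω = _ ↔ upperRank (fun i => V i ω) (Fin.last n) = k
    rw [hP, div_left_inj' (by positivity), add_comm, add_left_inj, Nat.cast_inj, upperRank_last]
  have hA : ∀ j, NullMeasurableSet {ω | upperRank (fun i => V i ω) j = k} μ := fun j =>
    ((measurable_upperRank j).comp (measurable_pi_lambda _ hmeas)
      (measurableSet_singleton _)).nullMeasurableSet
  have hpart : ∀ᵐ ω ∂μ, ∃! j, ω ∈ {ω | upperRank (fun i => V i ω) j = k} :=
    (ae_injective_of_measure_eq_zero hnoties).mono fun ω hω =>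
      existsUnique_upperRank_eq hω (by simp [Fin.is_le])
  rw [hevent, measure_eq_inv_card_of_ae_existsUnique hA
    (measure_upperRank_eq_of_exchangeable hmeas hexch k) hpart, Fintype.card_fin]
  simp
end
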